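/- Let (G,s,z,δ,k) be an instance of Short Restless Temporal Path with d(s,1) ≤ k and let T be the table defined from this instance. If T[u,t'] = k' < ∞ for a vertex appearance (u,t') with u incident to an edge of E_{t'}, then there is a δ-restless temporal s-u path of length k' in the temporal graph G^{u,t'} that arrives at u at some time in [t'−δ, t'] (for u = s and k' = 0 this is the trivial path of length 0). -/

import Mathlib

attribute [local instance] Classical.propDecidable

noncomputable section

/-- A temporal graph: a lifetime `tau` and, for each time step, a set of
undirected edges (unordered pairs of distinct vertices) over `V`;
edges exist only at time steps in `[1, tau]`. -/
structure TemporalGraph (V : Type*) where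
  tau : ℕ
  E : ℕ → Sym2 V → Prop
  time_mem : ∀ t e, E t e → 1 ≤ t ∧ t ≤ tau
  not_diag : ∀ t e, E t e → ¬ e.IsDiag

namespace TemporalGraph

variable {V : Type*}

/-- `G.IsPath s z m vs ts` : the sequence `(({vs (i-1), vs i}, ts i))_{i=1}^m` is a
temporal `s`-`z` path of length `m` in `G` (pairwise distinct vertices
`vs 0 = s, vs 1, …, vs m = z` and nondecreasing time stamps). -/
def IsPath (G : TemporalGraph V) (s z : V) (m : ℕ) (vs : ℕ → V) (ts : ℕ → ℕ) : Prop :=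
  vs 0 = s ∧ vs m = z ∧
  (∀ i j, i ≤ m → j ≤ m → i ≠ j → vs i ≠ vs j) ∧
  (∀ i, 1 ≤ i → i ≤ m → G.E (ts i) s(vs (i - 1), vs i)) ∧
  (∀ i, 1 ≤ i → i + 1 ≤ m → ts i ≤ ts (i + 1))

/-- `δ`-restless temporal path: consecutive time-edges are at most `δ` time steps apart. -/
def IsRestlessPath (G : TemporalGraph V) (δ : ℕ) (s z : V) (m : ℕ) (vs : ℕ → V)
    (ts : ℕ → ℕ) : Prop :=
  G.IsPath s z m vs ts ∧ ∀ i, 1 ≤ i → i + 1 ≤ m → ts (i + 1) ≤ ts i + δ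

/-- temporal `s`-`z` walk (vertices may repeat). -/
def IsWalk (G : TemporalGraph V) (s z : V) (m : ℕ) (vs : ℕ → V) (ts : ℕ → ℕ) : Prop :=
  vs 0 = s ∧ vs m = z ∧
  (∀ i, 1 ≤ i → i ≤ m → G.E (ts i) s(vs (i - 1), vs i)) ∧
  (∀ i, 1 ≤ i → i + 1 ≤ m → ts i ≤ ts (i + 1))

/-- `δ`-restless temporal walk. -/
def IsRestlessWalk (G : TemporalGraph V) (δ : ℕ) (s z : V) (m : ℕ) (vs : ℕ → V)
    (ts : ℕ → ℕ) : Prop :=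
  G.IsWalk s z m vs ts ∧ ∀ i, 1 ≤ i → i + 1 ≤ m → ts (i + 1) ≤ ts i + δ

/-- `G.dist z v t` : the minimum length of a temporal `v`-`z` path in `G` whose
departure time is at least `t`; `⊤` if no such path exists, and `0` for `v = z`. -/
def dist (G : TemporalGraph V) (z v : V) (t : ℕ) : ℕ∞ :=
  if v = z then 0
  else sInf {x : ℕ∞ | ∃ (m : ℕ) (vs : ℕ → V) (ts : ℕ → ℕ),
    G.IsPath v z m vs ts ∧ t ≤ ts 1 ∧ x = (m : ℕ∞)}

/-- The set `A_{a,t}^{b,t'}` of vertex appearances. -/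
def AreaAB (G : TemporalGraph V) (z a : V) (t : ℕ) (b : V) (t' : ℕ) : Set (V × ℕ) :=
  {w | G.dist z b t' < G.dist z w.1 w.2 ∧ G.dist z w.1 w.2 < G.dist z a t ∧
       t ≤ w.2 ∧ w.2 ≤ t'}

/-- The set `A^{b,t'}` of vertex appearances. -/
def AreaB (G : TemporalGraph V) (z b : V) (t' : ℕ) : Set (V × ℕ) :=
  {w | G.dist z b t' < G.dist z w.1 w.2 ∧ G.dist z w.1 w.2 < ⊤ ∧ w.2 ≤ t'}

/-- The temporal graph `G_{a,t}^{b,t'}`. -/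
def SubAB (G : TemporalGraph V) (z : V) (δ : ℕ) (a : V) (t : ℕ) (b : V) (t' : ℕ) :
    TemporalGraph V where
  tau := G.tau
  E := fun u e =>
    (G.E u e ∧ ∃ x y, e = s(x, y) ∧ (x, u) ∈ G.AreaAB z a t b t' ∧
        (y, u) ∈ G.AreaAB z a t b t') ∨
    (G.E u e ∧ u = t ∧ ∃ x, e = s(a, x) ∧ (x, t) ∈ G.AreaAB z a t b t') ∨
    (G.E u e ∧ t' ≤ u + δ ∧ ∃ x, e = s(x, b) ∧
        ((x, u) ∈ G.AreaAB z a t b t' ∨ (x = a ∧ u = t)))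
  time_mem := by rintro u e (⟨h, -⟩ | ⟨h, -⟩ | ⟨h, -⟩) <;> exact G.time_mem u e h
  not_diag := by rintro u e (⟨h, -⟩ | ⟨h, -⟩ | ⟨h, -⟩) <;> exact G.not_diag u e h

/-- The temporal graph `G^{b,t'}`. -/
def SubB (G : TemporalGraph V) (z : V) (δ : ℕ) (b : V) (t' : ℕ) : TemporalGraph V where
  tau := G.tau
  E := fun u e =>
    (G.E u e ∧ ∃ x y, e = s(x, y) ∧ (x, u) ∈ G.AreaB z b t' ∧ (y, u) ∈ G.AreaB z b t') ∨
    (G.E u e ∧ t' ≤ u + δ ∧ ∃ x, e = s(x, b) ∧ (x, u) ∈ G.AreaB z b t')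
  time_mem := by rintro u e (⟨h, -⟩ | ⟨h, -⟩) <;> exact G.time_mem u e h
  not_diag := by rintro u e (⟨h, -⟩ | ⟨h, -⟩) <;> exact G.not_diag u e h

/-- The vertex set of a temporal graph: all endpoints of its time-edges. -/
def vertexSet (G : TemporalGraph V) : Set V := {x | ∃ u e, G.E u e ∧ x ∈ e}

/-- Minimum length of a `δ`-restless temporal `a`-`b` path in `G` (`⊤` if none). -/
def restlessDist (G : TemporalGraph V) (δ : ℕ) (a b : V) : ℕ∞ :=
  sInf {x : ℕ∞ | ∃ m vs ts, G.IsRestlessPath δ a b m vs ts ∧ x = (m : ℕ∞)}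

/-- The base case of the table `T`: the value `T[u,t']` when `d(s,1) - d(u,t') ≤ ℓ`. -/
def tableBase (G : TemporalGraph V) (s z : V) (δ ℓ : ℕ) (u : V) (t' : ℕ) : ℕ∞ :=
  if u = s then 0
  else if 1 ≤ restlessDist (G.SubB z δ u t') δ s u ∧
          restlessDist (G.SubB z δ u t') δ s u ≤ (2 * ℓ : ℕ)
    then restlessDist (G.SubB z δ u t') δ s u
    else ⊤

/-- Fuelled version of the recursively defined table `T` (the fuel is an upper
bound on the recursion depth, which strictly decreases along the recursion of
the table via `d(s,1) - d(·,·)`). -/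
def tableFuel (G : TemporalGraph V) (s z : V) (δ ℓ : ℕ) : ℕ → V → ℕ → ℕ∞
  | 0, u, t' => tableBase G s z δ ℓ u t'
  | n + 1, u, t' =>
    if G.dist z s 1 - G.dist z u t' ≤ (ℓ : ℕ∞) then tableBase G s z δ ℓ u t'
    else sInf (insert ⊤ {x : ℕ∞ | ∃ (v : V) (t ℓ' : ℕ),
      1 ≤ t ∧ t ≤ t' ∧ (∃ e, G.E t e ∧ v ∈ e) ∧
      G.dist z u t' < G.dist z v t ∧ G.dist z v t ≤ G.dist z u t' + (ℓ : ℕ∞) + 1 ∧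
      1 ≤ ℓ' ∧ ℓ' ≤ 2 * ℓ + 1 ∧
      restlessDist (G.SubAB z δ v t u t') δ v u = (ℓ' : ℕ∞) ∧
      x = tableFuel G s z δ ℓ n v t + (ℓ' : ℕ∞)})

/-- The table `T` of the dynamic program, for the instance `(G,s,z,δ,k)`
(with `ℓ := k - d(s,1)`). -/
def table (G : TemporalGraph V) (s z : V) (δ k : ℕ) (u : V) (t' : ℕ) : ℕ∞ :=
  tableFuel G s z δ (k - (G.dist z s 1).toNat) ((G.dist z s 1).toNat + 1) u t'

/-- `vs i` is a distance separator of the temporal `s`-`z` path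
`(({vs (i-1), vs i}, ts i))_{i=1}^k` (with the convention `ts (k+1) = ts k`). -/
def IsDistSep (G : TemporalGraph V) (z : V) (k : ℕ) (vs : ℕ → V) (ts : ℕ → ℕ)
    (i : ℕ) : Prop :=
  (∀ j, j < i → G.dist z (vs i) (ts (i + 1)) < G.dist z (vs j) (ts (j + 1))) ∧
  (∀ j, i < j → j ≤ k → G.dist z (vs j) (ts (j + 1)) < G.dist z (vs i) (ts (i + 1)))

/-- The underlying (static) graph of a temporal graph. -/
def underlying (G : TemporalGraph V) : SimpleGraph V where
  Adj x y := ∃ t, G.E t s(x, y)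
  symm := by
    constructor
    rintro x y ⟨t, h⟩
    exact ⟨t, by rwa [Sym2.eq_swap]⟩
  loopless := by
    constructor
    rintro x ⟨t, h⟩
    exact G.not_diag t _ h (by simp)

/-- The set of non-isolated vertex appearances of `G`. -/
def NonIsolated (G : TemporalGraph V) : Set (V × ℕ) := {p | ∃ e, G.E p.2 e ∧ p.1 ∈ e}

/-- The weighted arcs of the auxiliary directed graph `D` (for destination `z`):
`DArc G z x y w` means there is an arc from `x` to `y` of weight `w`.
`Sum.inl ()` is the special vertex `z` of `D`; `Sum.inr (v, t)` is the vertex `v_t`. -/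
def DArc (G : TemporalGraph V) (z : V) : Unit ⊕ V × ℕ → Unit ⊕ V × ℕ → ℕ → Prop
  | Sum.inr (v, ta), Sum.inr (u, tb), w =>
      (w = 1 ∧ ta = tb ∧ v ≠ u ∧ G.E ta s(v, u)) ∨
      (w = 0 ∧ v = u ∧ (v, ta) ∈ G.NonIsolated ∧ (v, tb) ∈ G.NonIsolated ∧ tb < ta ∧
        ∀ t'', tb < t'' → t'' < ta → (v, t'') ∉ G.NonIsolated)
  | Sum.inl _, Sum.inr (u, tb), w =>
      w = 0 ∧ u = z ∧ (z, tb) ∈ G.NonIsolated ∧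
        ∀ t'', (z, t'') ∈ G.NonIsolated → t'' ≤ tb
  | _, _, _ => False

/-- The minimum total arc weight of a directed path in `D` from the special
vertex `z` to the vertex `v_t` (`⊤` if `v_t` is not reachable from `z`). -/
def dMinWeight (G : TemporalGraph V) (z v : V) (t : ℕ) : ℕ∞ :=
  sInf {x : ℕ∞ | ∃ (n : ℕ) (w : ℕ → Unit ⊕ V × ℕ) (wt : ℕ → ℕ),
    w 0 = Sum.inl () ∧ w n = Sum.inr (v, t) ∧
    (∀ i j, i ≤ n → j ≤ n → i ≠ j → w i ≠ w j) ∧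
    (∀ i, i < n → DArc G z (w i) (w (i + 1)) (wt i)) ∧
    x = ∑ i ∈ Finset.range n, (wt i : ℕ∞)}

end TemporalGraph

open TemporalGraph

/-!
Induction along the recursion of the table. In the base case `T[u,t']` is by definition the
length of a restless `s`-`u` path in `G^{u,t'}`. In the recursive case `T[u,t'] = T[v,t] + ℓ'`:
the path for `(v,t)` lives in `G^{v,t}` and arrives at `v` within `[t - δ, t]`, and it is
concatenated with a shortest restless `v`-`u` path in `G_{v,t}^{u,t'}`, which departs exactly at
time `t`. Both pieces are paths in `G^{u,t'}`, since `A^{v,t} ⊆ A^{u,t'}` when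
`d(u,t') < d(v,t)`. They share only `v`: the vertices of the first piece occur up to time `t`
with distance `> d(v,t)`, the inner vertices of the second piece occur from time `t` on with
distance `< d(v,t)`, and `d(w, ·)` is nondecreasing.
-/

theorem ENat.coe_mem_of_sInf_eq {S : Set ℕ∞} {k : ℕ} (h : sInf S = k) : (k : ℕ∞) ∈ S :=
  h ▸ csInf_mem (Set.nonempty_iff_ne_empty.2 fun hS => by simp [hS] at h)

def concatAt {α : Type*} (k : ℕ) (f g : ℕ → α) (i : ℕ) : α :=
  if i ≤ k then f i else g (i - k)

section concatAt

variable {α : Type*} {k i : ℕ} {f g : ℕ → α}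

theorem concatAt_of_le (h : i ≤ k) : concatAt k f g i = f i := if_pos h

theorem concatAt_of_lt (h : k < i) : concatAt k f g i = g (i - k) := if_neg h.not_ge

theorem concatAt_of_ge (hfg : f k = g 0) (h : k ≤ i) : concatAt k f g i = g (i - k) := by
  rcases h.eq_or_lt with rfl | h
  · rw [concatAt_of_le le_rfl, hfg, Nat.sub_self]
  · exact concatAt_of_lt h

theorem concatAt_step {m n : ℕ} {ts ts' : ℕ → ℕ} {R : ℕ → ℕ → Prop}
    (h : ∀ i, 1 ≤ i → i + 1 ≤ m → R (ts i) (ts (i + 1)))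
    (h' : ∀ i, 1 ≤ i → i + 1 ≤ n → R (ts' i) (ts' (i + 1)))
    (hjoin : 1 ≤ m → 1 ≤ n → R (ts m) (ts' 1)) :
    ∀ i, 1 ≤ i → i + 1 ≤ m + n → R (concatAt m ts ts' i) (concatAt m ts ts' (i + 1)) := by
  intro i hi hin
  rcases lt_trichotomy i m with him | rfl | him
  · rw [concatAt_of_le him.le, concatAt_of_le him]
    exact h i hi him
  · rw [concatAt_of_le le_rfl, concatAt_of_lt (by omega : i < i + 1), Nat.add_sub_cancel_left]
    exact hjoin hi (by omega)
  · rw [concatAt_of_lt him, concatAt_of_lt (by omega), Nat.sub_add_comm him.le]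
    exact h' (i - m) (by omega) (by omega)

end concatAt

namespace TemporalGraph

variable {V : Type*}

section Paths

variable {G H : TemporalGraph V} {δ m n i j t : ℕ} {a b c : V} {vs vs' : ℕ → V}
  {ts ts' : ℕ → ℕ}

theorem isPath_zero (G : TemporalGraph V) (a : V) (ts : ℕ → ℕ) :
    G.IsPath a a 0 (fun _ => a) ts :=
  ⟨rfl, rfl, fun _ _ hi hj hij => (hij (by omega)).elim, fun _ _ _ => by omega,
    fun _ _ _ => by omega⟩

theorem isPath_pair (he : G.E t s(a, b)) (hab : a ≠ b) :
    G.IsPath a b 1 (fun j => if j = 0 then a else b) (fun _ => t) := by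
  refine ⟨rfl, rfl, fun i j hi hj hij => ?_, fun i hi hi' => ?_, fun _ _ _ => by omega⟩
  · interval_cases i <;> interval_cases j <;> simp_all [eq_comm]
  · obtain rfl : i = 1 := by omega
    simpa using he

theorem IsPath.mono (hGH : ∀ t e, G.E t e → H.E t e) (hP : G.IsPath a b m vs ts) :
    H.IsPath a b m vs ts :=
  ⟨hP.1, hP.2.1, hP.2.2.1, fun i hi hi' => hGH _ _ (hP.2.2.2.1 i hi hi'), hP.2.2.2.2⟩

theorem IsRestlessPath.mono (hGH : ∀ t e, G.E t e → H.E t e)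
    (hP : G.IsRestlessPath δ a b m vs ts) : H.IsRestlessPath δ a b m vs ts :=
  ⟨hP.1.mono hGH, hP.2⟩

theorem IsPath.ts_le (hP : G.IsPath a b m vs ts) (hi : 1 ≤ i) (hij : i ≤ j) (hj : j ≤ m) :
    ts i ≤ ts j := by
  induction j, hij using Nat.le_induction with
  | base => exact le_rfl
  | succ j hij ih => exact (ih (by omega)).trans (hP.2.2.2.2 j (by omega) hj)

theorem IsPath.drop (hP : G.IsPath a b m vs ts) (hi : i ≤ m) :
    G.IsPath (vs i) b (m - i) (fun j => vs (i + j)) (fun j => ts (i + j)) := by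
  obtain ⟨-, hm, hinj, hE, hts⟩ := hP
  refine ⟨rfl, by simpa only [Nat.add_sub_cancel' hi] using hm,
    fun j j' hj hj' hne => hinj _ _ (by omega) (by omega) (by omega), fun j hj hjm => ?_,
    fun j hj hjm => hts (i + j) (by omega) (by omega)⟩
  simpa only [show i + j - 1 = i + (j - 1) by omega] using hE (i + j) (by omega) (by omega)

theorem IsPath.append (hP : G.IsPath a b m vs ts) (hP' : G.IsPath b c n vs' ts')
    (hdisj : ∀ i ≤ m, ∀ j ≤ n, vs i = vs' j → i = m ∧ j = 0)
    (hjoin : 1 ≤ m → 1 ≤ n → ts m ≤ ts' 1) :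
    G.IsPath a c (m + n) (concatAt m vs vs') (concatAt m ts ts') := by
  obtain ⟨h0, hm, hinj, hE, hts⟩ := hP
  obtain ⟨h0', hn, hinj', hE', hts'⟩ := hP'
  have hseam : vs m = vs' 0 := hm.trans h0'.symm
  have hlt : ∀ i j, i < j → j ≤ m + n → concatAt m vs vs' i ≠ concatAt m vs vs' j := by
    intro i j hij hj
    by_cases hjm : j ≤ m
    · rw [concatAt_of_le (hij.le.trans hjm), concatAt_of_le hjm]
      exact hinj i j (by omega) hjm hij.ne
    by_cases him : m ≤ i
    · rw [concatAt_of_ge hseam him, concatAt_of_ge hseam (by omega)]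
      exact hinj' _ _ (by omega) (by omega) (by omega)
    · rw [concatAt_of_le (by omega), concatAt_of_ge hseam (by omega)]
      exact fun heq => him (hdisj i (by omega) (j - m) (by omega) heq).1.ge
  refine ⟨by rw [concatAt_of_le (Nat.zero_le m), h0], ?_, ?_, fun i hi hin => ?_,
    concatAt_step hts hts' hjoin⟩
  · rw [concatAt_of_ge hseam (by omega), Nat.add_sub_cancel_left, hn]
  · intro i j hi hj hij
    rcases Nat.lt_or_gt_of_ne hij with h | h
    exacts [hlt i j h hj, (hlt j i h hi).symm]
  · by_cases him : i ≤ m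
    · rw [concatAt_of_le (i := i - 1) (by omega), concatAt_of_le him, concatAt_of_le him]
      exact hE i hi him
    · rw [concatAt_of_ge (i := i - 1) hseam (by omega), concatAt_of_ge (i := i) hseam (by omega),
        concatAt_of_lt (i := i) (by omega), show i - 1 - m = i - m - 1 by omega]
      exact hE' (i - m) (by omega) (by omega)

theorem IsRestlessPath.append (hP : G.IsRestlessPath δ a b m vs ts)
    (hP' : G.IsRestlessPath δ b c n vs' ts')
    (hdisj : ∀ i ≤ m, ∀ j ≤ n, vs i = vs' j → i = m ∧ j = 0)
    (hjoin : 1 ≤ m → 1 ≤ n → ts m ≤ ts' 1 ∧ ts' 1 ≤ ts m + δ) :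
    G.IsRestlessPath δ a c (m + n) (concatAt m vs vs') (concatAt m ts ts') :=
  ⟨hP.1.append hP'.1 hdisj fun hm hn => (hjoin hm hn).1,
    concatAt_step (R := fun t t' => t' ≤ t + δ) hP.2 hP'.2 fun hm hn => (hjoin hm hn).2⟩

theorem exists_isRestlessPath_of_restlessDist_eq (h : G.restlessDist δ a b = m) :
    ∃ vs ts, G.IsRestlessPath δ a b m vs ts := by
  obtain ⟨m', vs, ts, hP, hm⟩ := ENat.coe_mem_of_sInf_eq h
  obtain rfl : m' = m := by exact_mod_cast hm.symm
  exact ⟨vs, ts, hP⟩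

end Paths

section Dist

variable {G : TemporalGraph V} {z v x : V} {m τ : ℕ} {vs : ℕ → V} {ts : ℕ → ℕ}

theorem dist_mono (G : TemporalGraph V) (z v : V) : Monotone (G.dist z v) := by
  intro t₁ t₂ h
  unfold dist
  split_ifs
  · exact le_rfl
  · exact sInf_le_sInf fun _ ⟨m, vs, ts, hP, ht, hx⟩ => ⟨m, vs, ts, hP, h.trans ht, hx⟩

theorem dist_le_of_isPath (hP : G.IsPath v z m vs ts) (hτ : τ ≤ ts 1) :
    G.dist z v τ ≤ m := by
  unfold dist
  split_ifs
  exacts [zero_le, sInf_le ⟨m, vs, ts, hP, hτ, rfl⟩]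

theorem exists_isPath_of_dist_eq (h : G.dist z v τ = m) :
    ∃ vs ts, G.IsPath v z m vs ts ∧ τ ≤ ts 1 := by
  unfold dist at h
  split_ifs at h with hvz
  · obtain rfl : m = 0 := by exact_mod_cast h.symm
    subst hvz
    exact ⟨_, fun _ => τ, G.isPath_zero v _, le_rfl⟩
  · obtain ⟨m', vs, ts, hP, hτ, hm⟩ := ENat.coe_mem_of_sInf_eq h
    obtain rfl : m' = m := by exact_mod_cast hm.symm
    exact ⟨vs, ts, hP, hτ⟩

theorem dist_le_dist_add_one (he : G.E τ s(x, v)) (hxv : x ≠ v) :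
    G.dist z x τ ≤ G.dist z v τ + 1 := by
  by_cases hxz : x = z
  · simp [dist, hxz]
  obtain hv | ⟨L, hL⟩ : G.dist z v τ = ⊤ ∨ ∃ L : ℕ, G.dist z v τ = L := by
    cases G.dist z v τ <;> simp
  · simp [hv]
  obtain ⟨vs, ts, hP, hτ⟩ := exists_isPath_of_dist_eq hL
  rw [hL]
  by_cases hx : ∃ i ≤ L, vs i = x
  · obtain ⟨i, hiL, rfl⟩ := hx
    have hi : 1 ≤ i := Nat.one_le_iff_ne_zero.2 fun h => hxv (by rw [h, hP.1])
    have hiL' : i < L := hiL.lt_of_ne fun h => hxz (by rw [h, hP.2.1])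
    calc G.dist z (vs i) τ ≤ (L - i : ℕ) :=
          dist_le_of_isPath (hP.drop hiL) (hτ.trans (hP.ts_le le_rfl (by omega) hiL'))
      _ ≤ L + 1 := by exact_mod_cast (Nat.sub_le L i).trans (Nat.le_succ L)
  · push Not at hx
    have hdisj : ∀ i ≤ 1, ∀ j ≤ L, (if i = 0 then x else v) = vs j → i = 1 ∧ j = 0 := by
      intro i hi j hj heq
      interval_cases i
      · exact (hx j hj heq.symm).elim
      · refine ⟨rfl, by_contra fun hj0 => hP.2.2.1 j 0 hj (Nat.zero_le L) hj0 ?_⟩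
        simpa [hP.1] using heq.symm
    calc G.dist z x τ ≤ (1 + L : ℕ) :=
          dist_le_of_isPath ((isPath_pair he hxv).append hP hdisj fun _ _ => hτ)
            (by rw [concatAt_of_le le_rfl])
      _ = L + 1 := by push_cast; ring

end Dist

section Subgraphs

variable {G : TemporalGraph V} {z s u v x y w : V} {δ t t' τ k l m i j : ℕ}
  {vs vs' : ℕ → V} {ts ts' : ℕ → ℕ}

theorem mem_of_mem_sym2 {A : Set (V × ℕ)} (hw : w ∈ s(x, y)) (hx : (x, τ) ∈ A)
    (hy : (y, τ) ∈ A) : (w, τ) ∈ A := by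
  rcases Sym2.mem_iff.1 hw with rfl | rfl <;> assumption

theorem notMem_areaB_self : (u, τ) ∉ G.AreaB z u t' :=
  fun h => h.1.not_ge (G.dist_mono z u h.2.2)

theorem notMem_areaAB_self : (v, τ) ∉ G.AreaAB z v t u t' :=
  fun h => h.2.1.not_ge (G.dist_mono z v h.2.2.1)

theorem subB_E_mono (htt' : t ≤ t') (hd : G.dist z u t' < G.dist z v t)
    {e : Sym2 V} (he : (G.SubB z δ v t).E τ e) : (G.SubB z δ u t').E τ e := by
  have hA : ∀ {w}, w ∈ G.AreaB z v t → w ∈ G.AreaB z u t' :=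
    fun hw => ⟨hd.trans hw.1, hw.2.1, hw.2.2.trans htt'⟩
  rcases he with ⟨hE, x, y, rfl, hx, hy⟩ | ⟨hE, -, x, rfl, hx⟩
  · exact Or.inl ⟨hE, x, y, rfl, hA hx, hA hy⟩
  -- `d` drops by at most one along the edge into `v`, so `d(v,τ) = d(v,t)` for this `τ ≤ t`
  have hxv : x ≠ v := fun h => notMem_areaB_self (h ▸ hx)
  have hvt : G.dist z v t < ⊤ := hx.1.trans hx.2.1
  have hvτ : G.dist z v τ ≤ G.dist z v t := G.dist_mono z v hx.2.2
  have hvτ' : G.dist z v t ≤ G.dist z v τ :=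
    (ENat.lt_add_one_iff (hvτ.trans_lt hvt).ne).1
      (hx.1.trans_le (dist_le_dist_add_one hE hxv))
  exact Or.inl ⟨hE, x, v, rfl, hA hx, hd.trans_le hvτ', hvτ.trans_lt hvt, hx.2.2.trans htt'⟩

theorem subB_E_of_subAB_E (htt' : t ≤ t') (hd : G.dist z u t' < G.dist z v t)
    (hvt : G.dist z v t < ⊤) {e : Sym2 V} (he : (G.SubAB z δ v t u t').E τ e) :
    (G.SubB z δ u t').E τ e := by
  have hA : ∀ {w}, w ∈ G.AreaAB z v t u t' → w ∈ G.AreaB z u t' :=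
    fun hw => ⟨hw.1, hw.2.1.trans_le le_top, hw.2.2.2⟩
  have hv : (v, t) ∈ G.AreaB z u t' := ⟨hd, hvt, htt'⟩
  rcases he with ⟨hE, x, y, rfl, hx, hy⟩ | ⟨hE, rfl, x, rfl, hx⟩ |
    ⟨hE, hδ, x, rfl, hx | ⟨rfl, rfl⟩⟩
  · exact Or.inl ⟨hE, x, y, rfl, hA hx, hA hy⟩
  · exact Or.inl ⟨hE, v, x, rfl, hv, hA hx⟩
  · exact Or.inr ⟨hE, hδ, x, rfl, hA hx⟩
  · exact Or.inr ⟨hE, hδ, x, rfl, hv⟩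

theorem IsPath.last_time_of_subB (hm : 1 ≤ m) (hP : (G.SubB z δ u t').IsPath s u m vs ts) :
    t' ≤ ts m + δ ∧ ts m ≤ t' := by
  rcases hP.2.2.2.1 m hm le_rfl with ⟨-, x, y, he, hx, hy⟩ | ⟨-, hδ, x, -, hx⟩
  · have hu : u ∈ s(vs (m - 1), vs m) := by simp [hP.2.1]
    exact absurd (mem_of_mem_sym2 (he ▸ hu) hx hy) notMem_areaB_self
  · exact ⟨hδ, hx.2.2⟩

theorem IsPath.first_time_of_subAB (hm : 1 ≤ m) (hvu : v ≠ u)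
    (hP : (G.SubAB z δ v t u t').IsPath v u m vs ts) : ts 1 = t := by
  have hv : v ∈ s(vs (1 - 1), vs 1) := by simp [hP.1]
  rcases hP.2.2.2.1 1 le_rfl hm with ⟨-, x, y, he, hx, hy⟩ | ⟨-, ht, -⟩ |
    ⟨-, -, x, he, hx⟩
  · exact absurd (mem_of_mem_sym2 (he ▸ hv) hx hy) notMem_areaAB_self
  · exact ht
  · rw [he] at hv
    rcases Sym2.mem_iff.1 hv with rfl | rfl
    · rcases hx with hx | ⟨-, ht⟩
      exacts [absurd hx notMem_areaAB_self, ht]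
    · exact absurd rfl hvu

theorem IsPath.exists_mem_areaB_of_subB (hP : (G.SubB z δ v t).IsPath s v m vs ts)
    (hi : i < m) : ∃ τ, (vs i, τ) ∈ G.AreaB z v t := by
  have hw : vs i ∈ s(vs (i + 1 - 1), vs (i + 1)) := by simp
  rcases hP.2.2.2.1 (i + 1) (by omega) hi with ⟨-, x, y, he, hx, hy⟩ | ⟨-, -, x, he, hx⟩
  · exact ⟨_, mem_of_mem_sym2 (he ▸ hw) hx hy⟩
  · rw [he] at hw
    rcases Sym2.mem_iff.1 hw with h | h
    · exact ⟨_, h ▸ hx⟩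
    · exact absurd (h.trans hP.2.1.symm) (hP.2.2.1 i m hi.le le_rfl hi.ne)

theorem IsPath.exists_mem_areaAB_of_subAB (hP : (G.SubAB z δ v t u t').IsPath v u m vs ts)
    (hj : 1 ≤ j) (hjm : j < m) : ∃ τ, (vs j, τ) ∈ G.AreaAB z v t u t' := by
  have hv : vs j ≠ v := fun h =>
    hP.2.2.1 j 0 hjm.le (Nat.zero_le m) (by omega) (h.trans hP.1.symm)
  have hu : vs j ≠ u := fun h => hP.2.2.1 j m hjm.le le_rfl hjm.ne (h.trans hP.2.1.symm)
  have hw : vs j ∈ s(vs (j - 1), vs j) := Sym2.mem_mk_right _ _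
  rcases hP.2.2.2.1 j hj hjm.le with ⟨-, x, y, he, hx, hy⟩ | ⟨-, -, x, he, hx⟩ |
    ⟨-, -, x, he, hx⟩
  · exact ⟨_, mem_of_mem_sym2 (he ▸ hw) hx hy⟩
  · rw [he] at hw
    rcases Sym2.mem_iff.1 hw with h | rfl
    exacts [(hv h).elim, ⟨_, hx⟩]
  · rw [he] at hw
    rcases Sym2.mem_iff.1 hw with rfl | h
    · rcases hx with hx | ⟨h, -⟩
      exacts [⟨_, hx⟩, (hv h).elim]
    · exact (hu h).elim

theorem subB_subAB_paths_meet_only_at_end (htt' : t ≤ t') (hd : G.dist z u t' < G.dist z v t)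
    (hP : (G.SubB z δ v t).IsPath s v k vs ts)
    (hQ : (G.SubAB z δ v t u t').IsPath v u l vs' ts') :
    ∀ i ≤ k, ∀ j ≤ l, vs i = vs' j → i = k ∧ j = 0 := by
  intro i hi j hj heq
  rcases hi.lt_or_eq with hi | rfl
  · exfalso
    obtain ⟨τ, hτ⟩ := hP.exists_mem_areaB_of_subB hi
    rw [heq] at hτ
    rcases Nat.eq_zero_or_pos j with rfl | hj0
    · exact hP.2.2.1 i k hi.le le_rfl hi.ne (heq.trans (hQ.1.trans hP.2.1.symm))
    rcases hj.lt_or_eq with hjl | rfl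
    · obtain ⟨τ', hτ'⟩ := hQ.exists_mem_areaAB_of_subAB hj0 hjl
      exact lt_irrefl _
        ((hτ.1.trans_le (G.dist_mono z _ (hτ.2.2.trans hτ'.2.2.1))).trans hτ'.2.1)
    · rw [hQ.2.1] at hτ
      exact lt_irrefl _ ((hτ.1.trans_le (G.dist_mono z u (hτ.2.2.trans htt'))).trans hd)
  · refine ⟨rfl, by_contra fun hj0 => hQ.2.2.1 j 0 hj (Nat.zero_le l) hj0 ?_⟩
    rw [← heq, hP.2.1, hQ.1]

theorem IsRestlessPath.append_subAB (htt' : t ≤ t') (hd : G.dist z u t' < G.dist z v t)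
    (hvt : G.dist z v t < ⊤) (hl : 1 ≤ l)
    (hP : (G.SubB z δ v t).IsRestlessPath δ s v k vs ts)
    (hQ : (G.SubAB z δ v t u t').IsRestlessPath δ v u l vs' ts') :
    (G.SubB z δ u t').IsRestlessPath δ s u (k + l) (concatAt k vs vs') (concatAt k ts ts') := by
  have hvu : v ≠ u := fun h => hd.not_ge (h ▸ G.dist_mono z v htt')
  have hdep : ts' 1 = t := hQ.1.first_time_of_subAB hl hvu
  refine (hP.mono fun _ _ => subB_E_mono htt' hd).append
    (hQ.mono fun _ _ => subB_E_of_subAB_E htt' hd hvt)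
    (subB_subAB_paths_meet_only_at_end htt' hd hP.1 hQ.1) fun hk _ => ?_
  rw [hdep]
  exact (hP.1.last_time_of_subB hk).symm

end Subgraphs

section Table

variable {G : TemporalGraph V} {s z u : V} {δ ℓ t' k' : ℕ}

theorem exists_isRestlessPath_subB_of_tableBase_eq (h : G.tableBase s z δ ℓ u t' = k') :
    ∃ vs ts, (G.SubB z δ u t').IsRestlessPath δ s u k' vs ts := by
  unfold tableBase at h
  split_ifs at h with hus
  · subst hus
    obtain rfl : k' = 0 := by exact_mod_cast h.symm
    exact ⟨_, fun _ => t', G.SubB z δ u t' |>.isPath_zero u _, fun _ _ _ => by omega⟩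
  · exact exists_isRestlessPath_of_restlessDist_eq h
  · simp at h

theorem exists_isRestlessPath_subB_of_tableFuel_eq :
    ∀ (n : ℕ) (u : V) (t' k' : ℕ), G.tableFuel s z δ ℓ n u t' = k' →
      ∃ vs ts, (G.SubB z δ u t').IsRestlessPath δ s u k' vs ts
  | 0, _, _, _, h => exists_isRestlessPath_subB_of_tableBase_eq h
  | n + 1, u, t', k', h => by
    rw [tableFuel] at h
    split_ifs at h with hbase
    · exact exists_isRestlessPath_subB_of_tableBase_eq h
    obtain h | ⟨v, t, l, -, htt', -, hd, hdv, hl, -, hQ, hk⟩ := ENat.coe_mem_of_sInf_eq h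
    · simp at h
    have hut' : G.dist z u t' ≠ ⊤ := fun h => hbase (by simp [h])
    have hvt : G.dist z v t < ⊤ := hdv.trans_lt (by simpa [lt_top_iff_ne_top] using hut')
    obtain ⟨k, hk'⟩ : ∃ k : ℕ, G.tableFuel s z δ ℓ n v t = k := by
      cases hT : G.tableFuel s z δ ℓ n v t
      · simp [hT] at hk
      · exact ⟨_, rfl⟩
    obtain rfl : k' = k + l := by rw [hk'] at hk; exact_mod_cast hk
    obtain ⟨vs, ts, hP⟩ := exists_isRestlessPath_subB_of_tableFuel_eq n v t k hk'
    obtain ⟨vs', ts', hQ⟩ := exists_isRestlessPath_of_restlessDist_eq hQ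
    exact ⟨_, _, hP.append_subAB htt' hd hvt hl hQ⟩

end Table

end TemporalGraph

theorem statement2_general {V : Type*} (G : TemporalGraph V) (s z : V) (δ k : ℕ)
    (u : V) (t' : ℕ)
    (k' : ℕ)
    (hT : G.table s z δ k u t' = (k' : ℕ∞)) :
    ∃ vs ts, (G.SubB z δ u t').IsRestlessPath δ s u k' vs ts ∧
      (1 ≤ k' → t' ≤ ts k' + δ ∧ ts k' ≤ t') := by
  obtain ⟨vs, ts, hP⟩ := exists_isRestlessPath_subB_of_tableFuel_eq _ u t' k' hT
  exact ⟨vs, ts, hP, fun hk' => hP.1.last_time_of_subB hk'⟩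

/-- If `T[u,t'] = k' < ∞` for a vertex appearance `(u,t')` with
`u` incident to an edge of `E_{t'}`, then there is a `δ`-restless temporal
`s`-`u` path of length `k'` in the temporal graph `G^{u,t'}` arriving at `u`
at some time in `[t'-δ, t']` (for `u = s` and `k' = 0` it is the trivial path). -/
theorem statement2 {V : Type*} (G : TemporalGraph V) (s z : V) (δ k : ℕ)
    (hsz : s ≠ z) (hδ : 1 ≤ δ) (hk : 1 ≤ k)
    (hd : G.dist z s 1 ≤ (k : ℕ∞)) (u : V) (t' : ℕ)
    (hinc : ∃ e, G.E t' e ∧ u ∈ e) (k' : ℕ)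
    (hT : G.table s z δ k u t' = (k' : ℕ∞)) :
    ∃ vs ts, (G.SubB z δ u t').IsRestlessPath δ s u k' vs ts ∧
      (1 ≤ k' → t' ≤ ts k' + δ ∧ ts k' ≤ t') :=
  statement2_general G s z δ k u t' k' hT
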